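/- arXiv:1104.3980 — 8 statements merged into one kernel-verified Lean document; each statement's English description precedes it below -/
import Mathlib

section
/- Let (X, B, μ) be a measure space and T : X → X a bi-measurable, nonsingular, ergodic transformation. If T is exact (i.e., every set in the tail σ-algebra ∩_{m≥1} T^{-m}(B) has measure zero or full measure), then T satisfies the intersection property: for every Ω ∈ B with μ(Ω) > 0 there exists k ≥ 1 such that μ(T^{k+1}(Ω) ∩ T^k(Ω)) > 0. -/
open MeasureTheory Set Function

/-- If a bi-measurable, nonsingular, ergodic transformation is exact, then it
satisfies the intersection property. -/
theorem exact_implies_intersection_property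
    {X : Type*} [MeasurableSpace X] (μ : Measure X) (T : X → X)
    (hT : Measurable T)
    (hbi : ∀ s : Set X, MeasurableSet s → MeasurableSet (T '' s))
    (hns : ∀ s : Set X, MeasurableSet s → (μ (T ⁻¹' s) = 0 ↔ μ s = 0))
    (herg : ∀ s : Set X, MeasurableSet s → T ⁻¹' s = s → μ s = 0 ∨ μ sᶜ = 0)
    (hexact : ∀ s : Set X, MeasurableSet s →
      (∀ m : ℕ, 1 ≤ m → s = T^[m] ⁻¹' (T^[m] '' s)) → μ s = 0 ∨ μ sᶜ = 0)
    (Ω : Set X) (hΩ : MeasurableSet Ω) (hpos : 0 < μ Ω) :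
    ∃ k : ℕ, 1 ≤ k ∧ 0 < μ (T^[k+1] '' Ω ∩ T^[k] '' Ω) := by
  -- iterated images of measurable sets are measurable
  have himg : ∀ (m : ℕ) (s : Set X), MeasurableSet s → MeasurableSet (T^[m] '' s) := by
    intro m
    induction m with
    | zero => intro s hs; simpa using hs
    | succ n ih =>
      intro s hs
      rw [Function.iterate_succ, Set.image_comp]
      exact ih _ (hbi s hs)
  -- iterated images of positive-measure sets have positive measure
  have hposimg : ∀ (m : ℕ) (s : Set X), MeasurableSet s → 0 < μ s → 0 < μ (T^[m] '' s) := by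
    intro m
    induction m with
    | zero => intro s hs h; simpa using h
    | succ n ih =>
      intro s hs h
      rw [Function.iterate_succ, Set.image_comp]
      refine ih _ (hbi s hs) ?_
      refine pos_iff_ne_zero.mpr fun h0 => ?_
      have h1 : μ (T ⁻¹' (T '' s)) = 0 := (hns _ (hbi s hs)).mpr h0
      have h2 : μ s = 0 := measure_mono_null (Set.subset_preimage_image T s) h1
      exact h.ne' h2
  set S : Set X := ⋃ m : ℕ, T^[m+1] ⁻¹' (T^[m+1] '' Ω) with hS
  have hSmeas : MeasurableSet S :=
    MeasurableSet.iUnion fun m => (hT.iterate (m+1)) (himg (m+1) Ω hΩ)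
  -- S satisfies the tail condition
  have htail : ∀ m : ℕ, 1 ≤ m → S = T^[m] ⁻¹' (T^[m] '' S) := by
    intro m hm
    obtain ⟨m, rfl⟩ : ∃ m', m = m' + 1 := ⟨m - 1, by omega⟩
    refine subset_antisymm (Set.subset_preimage_image _ _) ?_
    conv_lhs => rw [hS, Set.image_iUnion, Set.preimage_iUnion]
    refine Set.iUnion_subset fun j => ?_
    intro x hx
    obtain ⟨w, hw, hwx⟩ := hx
    rcases le_or_gt (m + 1) (j + 1) with hjm | hjm
    · -- j + 1 ≥ m + 1 : stays in the j-th piece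
      have h1 : j + 1 - (m + 1) + (m + 1) = j + 1 := by omega
      have hxw : T^[j+1] x = T^[j+1] w := by
        calc T^[j+1] x = T^[j+1-(m+1)] (T^[m+1] x) := by
              rw [← Function.iterate_add_apply, h1]
          _ = T^[j+1-(m+1)] (T^[m+1] w) := by rw [hwx]
          _ = T^[j+1] w := by rw [← Function.iterate_add_apply, h1]
      refine Set.mem_iUnion.mpr ⟨j, ?_⟩
      show T^[j+1] x ∈ T^[j+1] '' Ω
      rw [hxw]
      exact hw
    · -- j + 1 < m + 1 : lands in the m-th piece
      obtain ⟨z, hz, hzw⟩ := hw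
      have h1 : m + 1 - (j + 1) + (j + 1) = m + 1 := by omega
      have hxz : T^[m+1] x = T^[m+1] z := by
        calc T^[m+1] x = T^[m+1] w := hwx.symm
          _ = T^[m+1-(j+1)] (T^[j+1] w) := by
              rw [← Function.iterate_add_apply, h1]
          _ = T^[m+1-(j+1)] (T^[j+1] z) := by rw [hzw]
          _ = T^[m+1] z := by rw [← Function.iterate_add_apply, h1]
      refine Set.mem_iUnion.mpr ⟨m, ?_⟩
      show T^[m+1] x ∈ T^[m+1] '' Ω
      exact ⟨z, hz, hxz.symm⟩
  -- Ω ⊆ S, hence μ S > 0, hence Sᶜ is null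
  have hΩS : Ω ⊆ S := fun x hx =>
    Set.mem_iUnion.mpr ⟨0, Set.subset_preimage_image _ _ hx⟩
  have hSpos : 0 < μ S := lt_of_lt_of_le hpos (measure_mono hΩS)
  have hScompl : μ Sᶜ = 0 := by
    rcases hexact S hSmeas htail with h | h
    · exact absurd h hSpos.ne'
    · exact h
  -- T '' Ω has positive measure and meets S in positive measure
  have hTΩpos : 0 < μ (T '' Ω) := by
    have := hposimg 1 Ω hΩ hpos
    simpa using this
  have hint : 0 < μ ((T '' Ω) ∩ S) := by
    have h1 : μ ((T '' Ω) \ S) = 0 :=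
      measure_mono_null (Set.diff_subset_compl _ _) hScompl
    have h2 : μ (T '' Ω) ≤ μ ((T '' Ω) ∩ S) + μ ((T '' Ω) \ S) :=
      measure_le_inter_add_diff μ _ S
    rw [h1, add_zero] at h2
    exact lt_of_lt_of_le hTΩpos h2
  rw [hS, Set.inter_iUnion] at hint
  have hex : ∃ m, μ ((T '' Ω) ∩ (T^[m+1] ⁻¹' (T^[m+1] '' Ω))) ≠ 0 := by
    by_contra h
    push_neg at h
    exact hint.ne' (measure_iUnion_null h)
  obtain ⟨m, hm⟩ := hex
  refine ⟨m + 1, by omega, ?_⟩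
  set A := (T '' Ω) ∩ (T^[m+1] ⁻¹' (T^[m+1] '' Ω)) with hA
  have hAmeas : MeasurableSet A :=
    (hbi Ω hΩ).inter ((hT.iterate (m+1)) (himg (m+1) Ω hΩ))
  have hApos : 0 < μ A := pos_iff_ne_zero.mpr hm
  have hTA : 0 < μ (T^[m+1] '' A) := hposimg (m+1) A hAmeas hApos
  refine lt_of_lt_of_le hTA (measure_mono ?_)
  rintro y ⟨x, ⟨hx1, hx2⟩, rfl⟩
  constructor
  · obtain ⟨z, hz, rfl⟩ := hx1
    exact ⟨z, hz, (Function.iterate_succ_apply T (m+1) z).symm⟩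
  · exact hx2
end

section
/- Let (X, B, μ) be a measure space and T : X → X a bi-measurable, nonsingular, ergodic transformation. If T satisfies the intersection property (for every Ω ∈ B with μ(Ω) > 0 there exists k ≥ 1 with μ(T^{k+1}(Ω) ∩ T^k(Ω)) > 0), then T is exact: every set Ω ∈ ∩_{m≥1} T^{-m}(B) has μ(Ω) = 0 or μ(X∖Ω) = 0. -/
/-!
If `s` is a tail set, so is `A = s \ T⁻¹' s`, and `A` is disjoint from `T⁻¹' A`. Since a tail
set is recovered as `T^{-m}(T^m A)`, the preimage of `T^{k+1} A ∩ T^k A` under `T^{k+1}` is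
`A ∩ T⁻¹' A = ∅`, so nonsingularity and the intersection property force `μ A = 0`. Applied to
`Ω` and `Ωᶜ` this makes `Ω` invariant modulo `μ`, and for a nonsingular ergodic map almost
invariant sets are null or conull.
-/

open MeasureTheory Set Function

section TailSets

variable {X : Type*}

/-- Membership in `⋂_{m ≥ 1} T^{-m}(𝒫 X)`; equivalently `s = T^{-m}(T^m s)` for all `m ≥ 1`. -/
def IsTailSet (T : X → X) (s : Set X) : Prop :=
  ∀ m : ℕ, 1 ≤ m → ∃ t, T^[m] ⁻¹' t = s

namespace IsTailSet

variable {T : X → X} {s t : Set X}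

theorem preimage_image (hs : IsTailSet T s) {m : ℕ} (hm : 1 ≤ m) :
    T^[m] ⁻¹' (T^[m] '' s) = s := by
  obtain ⟨t, rfl⟩ := hs m hm
  exact preimage_image_preimage

protected theorem compl (hs : IsTailSet T s) : IsTailSet T sᶜ :=
  fun m hm => by
    obtain ⟨t, rfl⟩ := hs m hm
    exact ⟨tᶜ, preimage_compl⟩

protected theorem inter (hs : IsTailSet T s) (ht : IsTailSet T t) : IsTailSet T (s ∩ t) :=
  fun m hm => by
    obtain ⟨a, rfl⟩ := hs m hm
    obtain ⟨b, rfl⟩ := ht m hm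
    exact ⟨a ∩ b, preimage_inter⟩

protected theorem preimage (hs : IsTailSet T s) : IsTailSet T (T ⁻¹' s) :=
  fun m hm => by
    obtain ⟨t, rfl⟩ := hs m hm
    exact ⟨T ⁻¹' t, by rw [← preimage_comp, ← preimage_comp, (Commute.self_iterate T m).comp_eq]⟩

end IsTailSet

section Measure

variable [MeasurableSpace X] {μ : Measure X} {T : X → X} {s : Set X}

theorem measurableSet_iterate_image (hbi : ∀ s : Set X, MeasurableSet s → MeasurableSet (T '' s))
    (n : ℕ) (hs : MeasurableSet s) : MeasurableSet (T^[n] '' s) := by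
  induction n with
  | zero => simpa using hs
  | succ n ih =>
    rw [iterate_succ', image_comp]
    exact hbi _ ih

theorem measure_eq_zero_of_iterate_preimage (hT : Measurable T)
    (hns : ∀ s : Set X, MeasurableSet s → μ (T ⁻¹' s) = 0 → μ s = 0)
    (n : ℕ) (hs : MeasurableSet s) (h : μ (T^[n] ⁻¹' s) = 0) : μ s = 0 := by
  induction n generalizing s with
  | zero => simpa using h
  | succ n ih =>
    rw [iterate_succ', preimage_comp] at h
    exact hns s hs (ih (hs.preimage hT) h)

theorem IsTailSet.measure_eq_zero_of_disjoint_preimage (hT : Measurable T)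
    (hbi : ∀ s : Set X, MeasurableSet s → MeasurableSet (T '' s))
    (hns : ∀ s : Set X, MeasurableSet s → μ (T ⁻¹' s) = 0 → μ s = 0)
    (hint : ∀ s : Set X, MeasurableSet s → 0 < μ s →
      ∃ k : ℕ, 1 ≤ k ∧ 0 < μ (T^[k+1] '' s ∩ T^[k] '' s))
    (hsm : MeasurableSet s) (hs : IsTailSet T s) (hdisj : Disjoint s (T ⁻¹' s)) : μ s = 0 := by
  by_contra hpos
  obtain ⟨k, hk, hpos_k⟩ := hint s hsm (pos_iff_ne_zero.2 hpos)
  have hpre : T^[k+1] ⁻¹' (T^[k+1] '' s ∩ T^[k] '' s) = ∅ := by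
    rw [preimage_inter, hs.preimage_image (m := k + 1) (by omega), iterate_succ, preimage_comp,
      hs.preimage_image hk, hdisj.inter_eq]
  have hmeas := (measurableSet_iterate_image hbi (k + 1) hsm).inter
    (measurableSet_iterate_image hbi k hsm)
  exact hpos_k.ne' (measure_eq_zero_of_iterate_preimage hT hns (k + 1) hmeas
    (by rw [hpre, measure_empty]))

theorem IsTailSet.measure_diff_preimage_eq_zero (hT : Measurable T)
    (hbi : ∀ s : Set X, MeasurableSet s → MeasurableSet (T '' s))
    (hns : ∀ s : Set X, MeasurableSet s → μ (T ⁻¹' s) = 0 → μ s = 0)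
    (hint : ∀ s : Set X, MeasurableSet s → 0 < μ s →
      ∃ k : ℕ, 1 ≤ k ∧ 0 < μ (T^[k+1] '' s ∩ T^[k] '' s))
    (hsm : MeasurableSet s) (hs : IsTailSet T s) : μ (s \ T ⁻¹' s) = 0 :=
  (hs.inter hs.compl.preimage).measure_eq_zero_of_disjoint_preimage hT hbi hns hint
    (hsm.diff (hsm.preimage hT)) (disjoint_left.2 fun _ hx hx' => hx.2 hx'.1)

theorem IsTailSet.preimage_ae_eq (hT : Measurable T)
    (hbi : ∀ s : Set X, MeasurableSet s → MeasurableSet (T '' s))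
    (hns : ∀ s : Set X, MeasurableSet s → μ (T ⁻¹' s) = 0 → μ s = 0)
    (hint : ∀ s : Set X, MeasurableSet s → 0 < μ s →
      ∃ k : ℕ, 1 ≤ k ∧ 0 < μ (T^[k+1] '' s ∩ T^[k] '' s))
    (hsm : MeasurableSet s) (hs : IsTailSet T s) : T ⁻¹' s =ᵐ[μ] s := by
  refine ae_eq_set.2 ⟨?_, hs.measure_diff_preimage_eq_zero hT hbi hns hint hsm⟩
  simpa only [preimage_compl, compl_sdiff_compl] using
    hs.compl.measure_diff_preimage_eq_zero hT hbi hns hint hsm.compl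

theorem quasiErgodic_of_measure_preimage_eq_zero (hT : Measurable T)
    (hns : ∀ s : Set X, MeasurableSet s → μ s = 0 → μ (T ⁻¹' s) = 0)
    (herg : ∀ s : Set X, MeasurableSet s → T ⁻¹' s = s → μ s = 0 ∨ μ sᶜ = 0) :
    QuasiErgodic T μ where
  measurable := hT
  absolutelyContinuous := Measure.AbsolutelyContinuous.mk fun s hs h => by
    rw [Measure.map_apply hT hs]
    exact hns s hs h
  aeconst_set s hs hinv :=
    Filter.eventuallyConst_set'.2 ((herg s hs hinv).imp ae_eq_empty.2 ae_eq_univ.2)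

end Measure

end TailSets

/-- If a bi-measurable, nonsingular, ergodic transformation satisfies the
intersection property, then it is exact. -/
theorem intersection_property_implies_exact
    {X : Type*} [MeasurableSpace X] (μ : Measure X) (T : X → X)
    (hT : Measurable T)
    (hbi : ∀ s : Set X, MeasurableSet s → MeasurableSet (T '' s))
    (hns : ∀ s : Set X, MeasurableSet s → (μ (T ⁻¹' s) = 0 ↔ μ s = 0))
    (herg : ∀ s : Set X, MeasurableSet s → T ⁻¹' s = s → μ s = 0 ∨ μ sᶜ = 0)
    (hint : ∀ s : Set X, MeasurableSet s → 0 < μ s →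
      ∃ k : ℕ, 1 ≤ k ∧ 0 < μ (T^[k+1] '' s ∩ T^[k] '' s))
    (Ω : Set X) (hΩ : MeasurableSet Ω)
    (htail : ∀ m : ℕ, 1 ≤ m → Ω = T^[m] ⁻¹' (T^[m] '' Ω)) :
    μ Ω = 0 ∨ μ Ωᶜ = 0 := by
  have hΩtail : IsTailSet T Ω := fun m hm => ⟨_, (htail m hm).symm⟩
  have hergodic : QuasiErgodic T μ :=
    quasiErgodic_of_measure_preimage_eq_zero hT (fun s hs => (hns s hs).2) herg
  have hinv : T ⁻¹' Ω =ᵐ[μ] Ω :=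
    hΩtail.preimage_ae_eq hT hbi (fun s hs => (hns s hs).1) hint hΩ
  exact (hergodic.ae_empty_or_univ₀ hΩ.nullMeasurableSet hinv).imp ae_eq_empty.1 ae_eq_univ.1
end

section
/- Let T : X → X be bi-measurable and nonsingular on a measure space (X, B, μ), let Ω ∈ B, and set S = ∪_{k≥0} T^{-k}(T^k(T(Ω))). Then S = T^{-m}(T^m(S)) for every m ≥ 0; in particular S lies in the tail σ-algebra ∩_{m≥0} T^{-m}(B), and if μ(Ω) > 0 then μ(S) > 0. -/
/-! If `f^[m] x = f^[m] y` with `f^[k] y ∈ f^[k] '' s`, then `f^[k + m] x ∈ f^[k + m] '' s`: the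
index shift `k ↦ k + m` makes the union saturated for every `f^[m]`. Positivity comes from
`Ω ⊆ T ⁻¹' (T '' Ω)` and nonsingularity, which give `0 < μ (T '' Ω)`, and `T '' Ω ⊆ S`. -/

open MeasureTheory Set Function

def iterateSaturation {α : Type*} (f : α → α) (s : Set α) : Set α :=
  ⋃ k : ℕ, f^[k] ⁻¹' (f^[k] '' s)

section Saturation

variable {α : Type*} (f : α → α) (s : Set α)

theorem subset_iterateSaturation : s ⊆ iterateSaturation f s := fun x hx =>
  mem_iUnion.2 ⟨0, by simpa using hx⟩

theorem preimage_image_preimage_iterate_image_subset (k m : ℕ) :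
    f^[m] ⁻¹' (f^[m] '' (f^[k] ⁻¹' (f^[k] '' s))) ⊆ f^[k + m] ⁻¹' (f^[k + m] '' s) := by
  rintro x ⟨y, ⟨z, hz, hzy⟩, hyx⟩
  refine ⟨z, hz, ?_⟩
  calc f^[k + m] z = f^[m] (f^[k] z) := by rw [add_comm, iterate_add_apply]
    _ = f^[m] (f^[k] y) := by rw [hzy]
    _ = f^[k] (f^[m] y) := by rw [← iterate_add_apply, ← iterate_add_apply, add_comm]
    _ = f^[k + m] x := by rw [hyx, iterate_add_apply]

theorem preimage_image_iterateSaturation (m : ℕ) :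
    f^[m] ⁻¹' (f^[m] '' iterateSaturation f s) = iterateSaturation f s := by
  refine Subset.antisymm ?_ (subset_preimage_image _ _)
  rw [iterateSaturation, image_iUnion, preimage_iUnion]
  exact iUnion_subset fun k =>
    (preimage_image_preimage_iterate_image_subset f s k m).trans
      (subset_iUnion_of_subset (k + m) le_rfl)

end Saturation

theorem measure_image_pos_of_nonsingular {X : Type*} [MeasurableSpace X] {μ : Measure X}
    {T : X → X} (hbi : ∀ s : Set X, MeasurableSet s → MeasurableSet (T '' s))
    (hns : ∀ s : Set X, MeasurableSet s → (μ (T ⁻¹' s) = 0 ↔ μ s = 0))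
    {s : Set X} (hs : MeasurableSet s) (hμs : 0 < μ s) : 0 < μ (T '' s) := by
  refine pos_iff_ne_zero.2 fun hnull => hμs.ne' ?_
  exact measure_mono_null (subset_preimage_image T s) ((hns _ (hbi s hs)).2 hnull)

theorem tail_set_of_union_general
    {X : Type*} [MeasurableSpace X] (μ : Measure X) (T : X → X)
    (hbi : ∀ s : Set X, MeasurableSet s → MeasurableSet (T '' s))
    (hns : ∀ s : Set X, MeasurableSet s → (μ (T ⁻¹' s) = 0 ↔ μ s = 0))
    (Ω : Set X) (hΩ : MeasurableSet Ω) :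
    (∀ m : ℕ, (⋃ k : ℕ, T^[k] ⁻¹' (T^[k] '' (T '' Ω)))
        = T^[m] ⁻¹' (T^[m] '' (⋃ k : ℕ, T^[k] ⁻¹' (T^[k] '' (T '' Ω))))) ∧
      (0 < μ Ω → 0 < μ (⋃ k : ℕ, T^[k] ⁻¹' (T^[k] '' (T '' Ω)))) :=
  ⟨fun m => (preimage_image_iterateSaturation T (T '' Ω) m).symm, fun hμΩ =>
    (measure_image_pos_of_nonsingular hbi hns hΩ hμΩ).trans_le
      (measure_mono (subset_iterateSaturation T (T '' Ω)))⟩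

/-- For a bi-measurable nonsingular map `T` and a measurable set `Ω`, the set
`S = ⋃_{k ≥ 0} T^{-k}(T^k(T(Ω)))` satisfies `S = T^{-m}(T^m(S))` for every
`m ≥ 0` (so `S` lies in the tail σ-algebra), and `μ(Ω) > 0` implies `μ(S) > 0`. -/
theorem tail_set_of_union
    {X : Type*} [MeasurableSpace X] (μ : Measure X) (T : X → X)
    (hT : Measurable T)
    (hbi : ∀ s : Set X, MeasurableSet s → MeasurableSet (T '' s))
    (hns : ∀ s : Set X, MeasurableSet s → (μ (T ⁻¹' s) = 0 ↔ μ s = 0))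
    (Ω : Set X) (hΩ : MeasurableSet Ω) :
    (∀ m : ℕ, (⋃ k : ℕ, T^[k] ⁻¹' (T^[k] '' (T '' Ω)))
        = T^[m] ⁻¹' (T^[m] '' (⋃ k : ℕ, T^[k] ⁻¹' (T^[k] '' (T '' Ω))))) ∧
      (0 < μ Ω → 0 < μ (⋃ k : ℕ, T^[k] ⁻¹' (T^[k] '' (T '' Ω)))) :=
  tail_set_of_union_general μ T hbi hns Ω hΩ
end

section
/- Let B₁ = [[1,1],[0,1]] and B₂ = [[1,0],[1,1]], and for each k ≥ 1 consider the partition P^(k) of ℝ²₊ into the 2^k cones B_{m₁}⋯B_{m_k}(ℝ²₊) with m_i ∈ {1,2}. Let K be a compact subset of ℝ²₊ with Lebesgue measure μ. Then max over C ∈ P^(k) of μ(K ∩ C) tends to 0 as k → ∞. In fact, if K ⊆ {λ : λ₁ + λ₂ ≤ α}, then μ(K ∩ C) ≤ α²/(2(k+1)) for every C ∈ P^(k). -/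
/-!
If `M = coneMat m` has column sums `p, q`, then `M x` with `x ∈ ℝ²₊` has coordinate sum
`p x₀ + q x₁`, so `K ∩ M(ℝ²₊)` lies in the image under `M` of the triangle
`{x ∈ ℝ²₊ | p x₀ + q x₁ ≤ α}`, whose area is `α² / (2pq)`; as `det M = 1`, `M` preserves area.
Appending `B₁` or `B₂` to the product turns the column sums `(p, q)` into `(p, p + q)` or
`(p + q, q)`, which raises `pq` by `p²` or `q²`, i.e. by at least one; hence `pq ≥ k + 1`.
-/

open MeasureTheory Set Function

/-- The positive cone in the plane. -/
def R2plus : Set (Fin 2 → ℝ) := {v | 0 ≤ v 0 ∧ 0 ≤ v 1}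

/-- The elementary matrix `B₁ = [[1,1],[0,1]]`. -/
def Bone : Matrix (Fin 2) (Fin 2) ℝ := !![1, 1; 0, 1]

/-- The elementary matrix `B₂ = [[1,0],[1,1]]`. -/
def Btwo : Matrix (Fin 2) (Fin 2) ℝ := !![1, 0; 1, 1]

/-- The product `B_{m₁} ⋯ B_{m_k}` encoded by a list of booleans. -/
def coneMat (m : List Bool) : Matrix (Fin 2) (Fin 2) ℝ :=
  (m.map (fun b => if b then Bone else Btwo)).prod

/-- The cone `B_{m₁} ⋯ B_{m_k}(ℝ²₊)`. -/
def coneOf (m : List Bool) : Set (Fin 2 → ℝ) := (coneMat m).mulVec '' R2plus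

open Matrix

theorem volume_region_between_cc_eq_lintegral {X : Type*} [MeasurableSpace X] (μ : Measure X)
    [SFinite μ] {f g : X → ℝ} (hf : Measurable f) (hg : Measurable g) {s : Set X}
    (hs : MeasurableSet s) :
    μ.prod volume {p : X × ℝ | p.1 ∈ s ∧ p.2 ∈ Icc (f p.1) (g p.1)} =
      ∫⁻ x in s, ENNReal.ofReal (g x - f x) ∂μ := by
  rw [Measure.prod_apply (measurableSet_region_between_cc hf hg hs),
    ← lintegral_indicator hs]
  congr 1 with x
  by_cases hx : x ∈ s
  · rw [indicator_of_mem hx, ← Real.volume_Icc]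
    congr 1 with y
    simp [hx]
  · simp [hx, preimage]

def triangle (w : Fin 2 → ℝ) (α : ℝ) : Set (Fin 2 → ℝ) := {x | x ∈ R2plus ∧ w ⬝ᵥ x ≤ α}

theorem volume_triangle_one {α : ℝ} (hα : 0 ≤ α) :
    volume (triangle 1 α) = ENNReal.ofReal (α ^ 2 / 2) := by
  have hpre : triangle 1 α = MeasurableEquiv.finTwoArrow ⁻¹'
      {p : ℝ × ℝ | p.1 ∈ Icc 0 α ∧ p.2 ∈ Icc 0 (α - p.1)} := by
    ext x
    simp only [triangle, R2plus, mem_ofPred_eq, mem_preimage, MeasurableEquiv.finTwoArrow_apply,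
      mem_Icc, dotProduct, Fin.sum_univ_two, Pi.one_apply, one_mul]
    exact ⟨fun ⟨⟨h0, h1⟩, h⟩ => ⟨⟨h0, by linarith⟩, h1, by linarith⟩,
      fun ⟨⟨h0, _⟩, h1, h⟩ => ⟨⟨h0, h1⟩, by linarith⟩⟩
  have hmeas : MeasurableSet {p : ℝ × ℝ | p.1 ∈ Icc 0 α ∧ p.2 ∈ Icc 0 (α - p.1)} :=
    measurableSet_region_between_cc measurable_const (by fun_prop) measurableSet_Icc
  rw [hpre, (volume_preserving_finTwoArrow ℝ).measure_preimage hmeas.nullMeasurableSet,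
    Measure.volume_eq_prod, volume_region_between_cc_eq_lintegral _ measurable_const
      (by fun_prop) measurableSet_Icc,
    ← ofReal_integral_eq_lintegral_ofReal (Continuous.integrableOn_Icc (by fun_prop))
      ((ae_restrict_iff' measurableSet_Icc).2 (.of_forall fun x hx => by simpa using hx.2)),
    integral_Icc_eq_integral_Ioc, ← intervalIntegral.integral_of_le hα]
  simp only [sub_zero]
  rw [intervalIntegral.integral_sub intervalIntegrable_const intervalIntegral.intervalIntegrable_id,
    intervalIntegral.integral_const, integral_id, smul_eq_mul]
  congr 1
  ring

theorem volume_triangle {w : Fin 2 → ℝ} (hw : ∀ i, 0 < w i) {α : ℝ} (hα : 0 ≤ α) :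
    volume (triangle w α) = ENNReal.ofReal (α ^ 2 / (2 * (w 0 * w 1))) := by
  have hdet : LinearMap.det (toLin' (diagonal w)) = w 0 * w 1 := by
    simp [LinearMap.det_toLin', det_diagonal, Fin.prod_univ_two]
  have hpre : triangle w α = toLin' (diagonal w) ⁻¹' triangle 1 α := by
    ext x
    simp [triangle, R2plus, mulVec_diagonal, dotProduct, Fin.sum_univ_two,
      mul_nonneg_iff_of_pos_left (hw 0), mul_nonneg_iff_of_pos_left (hw 1)]
  rw [hpre, Measure.addHaar_preimage_linearMap _ (by rw [hdet]; exact (mul_pos (hw 0) (hw 1)).ne'),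
    hdet, volume_triangle_one hα, ← ENNReal.ofReal_mul (abs_nonneg _),
    abs_of_pos (inv_pos.2 (mul_pos (hw 0) (hw 1)))]
  congr 1
  field_simp

theorem coneMat_det (m : List Bool) : (coneMat m).det = 1 := by
  rw [coneMat, ← coe_detMonoidHom, map_list_prod]
  refine List.prod_eq_one fun d hd => ?_
  simp only [List.map_map, List.mem_map] at hd
  obtain ⟨b, -, rfl⟩ := hd
  cases b <;> simp [Bone, Btwo, det_fin_two_of]

theorem coneMat_append_singleton (m : List Bool) (b : Bool) :
    coneMat (m ++ [b]) = coneMat m * if b then Bone else Btwo := by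
  simp [coneMat]

theorem vecMul_Bone (c : Fin 2 → ℝ) : c ᵥ* Bone = ![c 0, c 0 + c 1] := by
  ext i; fin_cases i <;> simp [Bone, vecMul, dotProduct, Fin.sum_univ_two]

theorem vecMul_Btwo (c : Fin 2 → ℝ) : c ᵥ* Btwo = ![c 0 + c 1, c 1] := by
  ext i; fin_cases i <;> simp [Btwo, vecMul, dotProduct, Fin.sum_univ_two]

theorem one_vecMul_coneMat_bounds (m : List Bool) :
    1 ≤ (1 ᵥ* coneMat m) 0 ∧ 1 ≤ (1 ᵥ* coneMat m) 1 ∧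
      (m.length + 1 : ℝ) ≤ (1 ᵥ* coneMat m) 0 * (1 ᵥ* coneMat m) 1 := by
  induction m using List.reverseRecOn with
  | nil => simp [coneMat, vecMul_one]
  | append_singleton m b ih =>
    obtain ⟨h0, h1, h⟩ := ih
    simp only [coneMat_append_singleton, ← vecMul_vecMul, List.length_append,
      List.length_singleton, Nat.cast_add, Nat.cast_one]
    cases b
    · simp only [Bool.false_eq_true, if_false, vecMul_Btwo, cons_val_zero, cons_val_one]
      exact ⟨by linarith, h1, by nlinarith⟩
    · simp only [if_true, vecMul_Bone, cons_val_zero, cons_val_one]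
      exact ⟨h0, by linarith, by nlinarith⟩

theorem volume_image_coneMat (m : List Bool) (s : Set (Fin 2 → ℝ)) :
    volume ((coneMat m).mulVec '' s) = volume s := by
  have := Measure.addHaar_image_linearMap volume (toLin' (coneMat m)) s
  rwa [LinearMap.det_toLin', coneMat_det, abs_one, ENNReal.ofReal_one, one_mul] at this

theorem inter_image_R2plus_subset (M : Matrix (Fin 2) (Fin 2) ℝ) (α : ℝ) :
    {v : Fin 2 → ℝ | v 0 + v 1 ≤ α} ∩ M.mulVec '' R2plus ⊆ M.mulVec '' triangle (1 ᵥ* M) α := by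
  rintro _ ⟨hv, x, hx, rfl⟩
  refine ⟨x, ⟨hx, ?_⟩, rfl⟩
  rw [← dotProduct_mulVec]
  simpa [dotProduct, Fin.sum_univ_two] using hv

theorem measure_inter_cone_small_general (K : Set (Fin 2 → ℝ)) (α : ℝ) (hα : 0 ≤ α)
    (hKα : K ⊆ {v | v 0 + v 1 ≤ α}) :
    (∀ m : List Bool,
        volume (K ∩ coneOf m) ≤ ENNReal.ofReal (α ^ 2 / (2 * (m.length + 1)))) ∧
      (∀ ε : ℝ, 0 < ε → ∃ k₀ : ℕ, ∀ m : List Bool, k₀ ≤ m.length →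
        volume (K ∩ coneOf m) ≤ ENNReal.ofReal ε) := by
  have bound (m : List Bool) :
      volume (K ∩ coneOf m) ≤ ENNReal.ofReal (α ^ 2 / (2 * (m.length + 1))) := by
    obtain ⟨h0, h1, hprod⟩ := one_vecMul_coneMat_bounds m
    calc volume (K ∩ coneOf m)
        ≤ volume ((coneMat m).mulVec '' triangle (1 ᵥ* coneMat m) α) :=
          measure_mono ((inter_subset_inter_left _ hKα).trans (inter_image_R2plus_subset _ α))
      _ = ENNReal.ofReal (α ^ 2 / (2 * ((1 ᵥ* coneMat m) 0 * (1 ᵥ* coneMat m) 1))) := by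
          rw [volume_image_coneMat,
            volume_triangle (Fin.forall_fin_two.2 ⟨by linarith, by linarith⟩) hα]
      _ ≤ ENNReal.ofReal (α ^ 2 / (2 * (m.length + 1))) := by
          gcongr
  refine ⟨bound, fun ε hε => ?_⟩
  obtain ⟨k₀, hk₀⟩ := exists_nat_ge (α ^ 2 / (2 * ε))
  refine ⟨k₀, fun m hm => (bound m).trans (ENNReal.ofReal_le_ofReal ?_)⟩
  rw [div_le_iff₀ (by positivity)]
  rw [div_le_iff₀ (by positivity)] at hk₀
  have hk : (k₀ : ℝ) ≤ m.length := by exact_mod_cast hm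
  nlinarith

/-- For a compact set `K ⊆ {λ₁ + λ₂ ≤ α}` in `ℝ²₊`, the measure of the
intersection of `K` with any cone of the `k`-th partition is at most
`α²/(2(k+1))`; in particular the maximum over cones tends to `0`. -/
theorem measure_inter_cone_small (K : Set (Fin 2 → ℝ)) (hK : IsCompact K)
    (hKsub : K ⊆ R2plus) (α : ℝ) (hα : 0 ≤ α)
    (hKα : K ⊆ {v | v 0 + v 1 ≤ α}) :
    (∀ m : List Bool,
        volume (K ∩ coneOf m) ≤ ENNReal.ofReal (α ^ 2 / (2 * (m.length + 1)))) ∧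
      (∀ ε : ℝ, 0 < ε → ∃ k₀ : ℕ, ∀ m : List Bool, k₀ ≤ m.length →
        volume (K ∩ coneOf m) ≤ ENNReal.ofReal ε) :=
  measure_inter_cone_small_general K α hα hKα
end

section
/- For any product M = B_{m₁}⋯B_{m_k} of k matrices each equal to B₁ = [[1,1],[0,1]] or B₂ = [[1,0],[1,1]], the column vectors l₁, l₂ of M satisfy ‖l₁‖₁ · ‖l₂‖₁ ≥ k + 1, where ‖l‖₁ denotes the sum of the (nonnegative integer) coordinates of l. -/
open Matrix

lemma column_norm_aux (m : List Bool) :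
    let M := (m.map (fun b => if b then !![(1:ℤ), 1; 0, 1] else !![1, 0; 1, 1])).prod
    0 ≤ M 0 0 ∧ 0 ≤ M 0 1 ∧ 0 ≤ M 1 0 ∧ 0 ≤ M 1 1 ∧
      M 0 0 * M 1 1 - M 0 1 * M 1 0 = 1 ∧
      (m.length : ℤ) + 1 ≤ (M 0 0 + M 1 0) * (M 0 1 + M 1 1) := by
  induction m with
  | nil => simp [Matrix.one_apply]
  | cons b t ih =>
    intro M
    obtain ⟨h1, h2, h3, h4, hdet, hle⟩ := ih
    set N := (t.map (fun b => if b then !![(1:ℤ), 1; 0, 1] else !![1, 0; 1, 1])).prod with hN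
    have hM : M = (if b then !![(1:ℤ), 1; 0, 1] else !![1, 0; 1, 1]) * N := by
      simp [M, hN]
    clear_value M
    subst hM
    cases b <;>
    · simp only [if_true, if_false, Matrix.mul_apply, Fin.sum_univ_two]
      norm_num [Matrix.cons_val_zero, Matrix.cons_val_one]
      refine ⟨?_, ?_, ?_, ?_, ?_, ?_⟩ <;> nlinarith [hle, hdet, h1, h2, h3, h4, mul_nonneg h1 h2, mul_nonneg h3 h4]

/-- The product of `k` elementary matrices `B₁ = [[1,1],[0,1]]`,
`B₂ = [[1,0],[1,1]]` has columns `l₁, l₂` with `‖l₁‖₁ · ‖l₂‖₁ ≥ k + 1`. -/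
theorem column_norm_product_ge
    (m : List Bool)
    (M : Matrix (Fin 2) (Fin 2) ℤ)
    (hM : M = (m.map (fun b => if b then !![1, 1; 0, 1] else !![1, 0; 1, 1])).prod) :
    (m.length : ℤ) + 1 ≤ (M 0 0 + M 1 0) * (M 0 1 + M 1 1) := by
  subst hM
  exact (column_norm_aux m).2.2.2.2.2
end

section
/- Let σ be a standard irreducible permutation of {1, …, n}, i.e., σ(1) = n and σ(n) = 1, with n ≥ 3. Define the Rauzy 'first case' update π' of an irreducible permutation π by π'(j) = π(j) if π(j) ≤ π(n), π'(j) = π(j) + 1 if π(n) < π(j) < n, and π'(j) = π(n) + 1 if π(j) = n. Then applying this update n − σ(n−1) times to σ yields a permutation π with π(n) = 1 and π(n−1) = n; in particular, after j applications (1 ≤ j ≤ n − σ(n−1)), the resulting permutation σ^(j) satisfies σ^(j)(n) = 1 and σ^(j)(n−1) = σ(n−1) + j. -/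
open Set

/-- A permutation of `{1,…,n}` is irreducible if it leaves no proper initial
segment `{1,…,k}` invariant. -/
def PermIrreducible (n : ℕ) (σ : ℕ → ℕ) : Prop :=
  ∀ k : ℕ, 1 ≤ k → k < n → ¬ Set.MapsTo σ (Set.Icc 1 k) (Set.Icc 1 k)

/-- The permutation update of the first case of Rauzy induction. -/
def rauzyA (n : ℕ) (π : ℕ → ℕ) : ℕ → ℕ :=
  fun j => if π j ≤ π n then π j else if π j < n then π j + 1 else π n + 1

/-! The update fixes `π n` and raises by one every value strictly between `π n` and `n`.
As `σ n = 1` and `σ` is injective, `σ (n - 1) > 1`, so `σ (n - 1)` climbs by one per update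
until it reaches `n`. -/

section Rauzy

variable {n : ℕ} {π : ℕ → ℕ} {i : ℕ}

@[simp]
theorem rauzyA_apply_self : rauzyA n π n = π n := by
  simp [rauzyA]

theorem rauzyA_apply_of_lt (hlo : π n < π i) (hhi : π i < n) : rauzyA n π i = π i + 1 := by
  simp [rauzyA, not_le.2 hlo, hhi]

@[simp]
theorem iterate_rauzyA_apply_self (j : ℕ) : ((rauzyA n)^[j] π) n = π n := by
  induction j with
  | zero => rfl
  | succ j ih => rw [Function.iterate_succ_apply', rauzyA_apply_self, ih]

theorem iterate_rauzyA_apply_of_lt (hlo : π n < π i) {j : ℕ} (hj : π i + j ≤ n) :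
    ((rauzyA n)^[j] π) i = π i + j := by
  induction j with
  | zero => rfl
  | succ j ih =>
    have hprev := ih (by omega)
    rw [Function.iterate_succ_apply', rauzyA_apply_of_lt, hprev, add_assoc]
    · rw [iterate_rauzyA_apply_self, hprev]
      omega
    · rw [hprev]
      omega

end Rauzy

theorem two_le_apply_pred_of_bijOn {n : ℕ} (hn : 2 ≤ n) {σ : ℕ → ℕ}
    (hbij : Set.BijOn σ (Set.Icc 1 n) (Set.Icc 1 n)) (hstdn : σ n = 1) :
    2 ≤ σ (n - 1) ∧ σ (n - 1) ≤ n := by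
  have hpred : n - 1 ∈ Set.Icc 1 n := ⟨by omega, by omega⟩
  have hne : σ (n - 1) ≠ 1 := fun h => by
    have := hbij.injOn hpred ⟨by omega, le_rfl⟩ (h.trans hstdn.symm)
    omega
  obtain ⟨hge, hle⟩ := hbij.mapsTo hpred
  omega

theorem standard_reaches_loop_general
    (n : ℕ) (hn : 3 ≤ n) (σ : ℕ → ℕ)
    (hbij : Set.BijOn σ (Set.Icc 1 n) (Set.Icc 1 n))
    (hstdn : σ n = 1) :
    (∀ j : ℕ, 1 ≤ j → j ≤ n - σ (n - 1) →
        ((rauzyA n)^[j] σ) n = 1 ∧ ((rauzyA n)^[j] σ) (n - 1) = σ (n - 1) + j) ∧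
      ((rauzyA n)^[n - σ (n - 1)] σ) (n - 1) = n := by
  obtain ⟨hlo, hhi⟩ := two_le_apply_pred_of_bijOn (by omega) hbij hstdn
  have hlt : σ n < σ (n - 1) := by omega
  refine ⟨fun j _ hj => ⟨by rw [iterate_rauzyA_apply_self, hstdn],
    iterate_rauzyA_apply_of_lt hlt (by omega)⟩, ?_⟩
  rw [iterate_rauzyA_apply_of_lt hlt (by omega)]
  omega

/-- Starting from a standard irreducible permutation `σ` and applying the
first-case Rauzy update `j` times (`1 ≤ j ≤ n - σ(n-1)`), the result `σ^(j)`
satisfies `σ^(j)(n) = 1` and `σ^(j)(n-1) = σ(n-1) + j`; in particular after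
`n - σ(n-1)` steps one reaches a loop permutation `π` with `π(n-1) = n`. -/
theorem standard_reaches_loop
    (n : ℕ) (hn : 3 ≤ n) (σ : ℕ → ℕ)
    (hbij : Set.BijOn σ (Set.Icc 1 n) (Set.Icc 1 n))
    (hirr : PermIrreducible n σ)
    (hstd1 : σ 1 = n) (hstdn : σ n = 1) :
    (∀ j : ℕ, 1 ≤ j → j ≤ n - σ (n - 1) →
        ((rauzyA n)^[j] σ) n = 1 ∧ ((rauzyA n)^[j] σ) (n - 1) = σ (n - 1) + j) ∧
      ((rauzyA n)^[n - σ (n - 1)] σ) (n - 1) = n :=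
  standard_reaches_loop_general n hn σ hbij hstdn
end

section
/- Every standard irreducible permutation update chain stays irreducible: if π is an irreducible permutation of {1,…,n} and π' is defined by π'(j) = π(j) if π(j) ≤ π(n), π'(j) = π(j)+1 if π(n) < π(j) < n, π'(j) = π(n)+1 if π(j) = n, then π' is a permutation of {1,…,n} and is irreducible. -/
open Set

/-!
Writing `m = π n`, the update is `rauzyA n π = τ ∘ π`, where `τ` fixes `1, …, m` and rotates
the cycle `m+1 → m+2 → ⋯ → n → m+1`; so `rauzyA n π` is again a permutation of `{1,…,n}`.

If it left `{1,…,k}` invariant for some `k < n`, then either `k ≤ m`, and since `τ` preserves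
`{1,…,k}` so would `π`; or `m < k`, and then `π` sends the `k + 1` points `{1,…,k} ∪ {n}`
injectively into the `k` points `τ⁻¹{1,…,k} = {1,…,k-1} ∪ {n}`, which is impossible.
-/

/-- The relabelling `τ` of the values in the first case of Rauzy induction, with `m = π n`. -/
def rauzyShift (n m x : ℕ) : ℕ :=
  if x ≤ m then x else if x < n then x + 1 else m + 1

theorem rauzyA_eq_comp (n : ℕ) (π : ℕ → ℕ) : rauzyA n π = rauzyShift n (π n) ∘ π := rfl

theorem rauzyShift_bijOn (n m : ℕ) : BijOn (rauzyShift n m) (Icc 1 n) (Icc 1 n) := by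
  have hmaps : MapsTo (rauzyShift n m) (Icc 1 n) (Icc 1 n) := by
    intro x ⟨hx1, hxn⟩
    simp only [rauzyShift, mem_Icc]
    split_ifs <;> omega
  refine ((finite_Icc 1 n).injOn_iff_bijOn_of_mapsTo hmaps).mp ?_
  intro x ⟨_, hxn⟩ y ⟨_, hyn⟩ hxy
  simp only [rauzyShift] at hxy
  split_ifs at hxy <;> omega

theorem rauzyShift_le_iff_of_le {n m k x : ℕ} (hkm : k ≤ m) :
    rauzyShift n m x ≤ k ↔ x ≤ k := by
  unfold rauzyShift
  split_ifs <;> omega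

theorem rauzyShift_le_iff_of_lt {n m k x : ℕ} (hmk : m < k) (hxn : x ≤ n) :
    rauzyShift n m x ≤ k ↔ x < k ∨ x = n := by
  unfold rauzyShift
  split_ifs <;> omega

theorem not_mapsTo_insert_Icc_insert_Ico {f : ℕ → ℕ} {n k : ℕ} (hf : InjOn f (Icc 1 n))
    (hk : 1 ≤ k) (hkn : k < n) : ¬ MapsTo f (insert n (Icc 1 k)) (insert n (Ico 1 k)) := by
  intro hmaps
  have hsub : insert n (Icc 1 k) ⊆ Icc 1 n :=
    insert_subset ⟨by omega, le_rfl⟩ (Icc_subset_Icc_right hkn.le)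
  have hcard := ncard_le_ncard_of_injOn f hmaps (hf.mono hsub)
  rw [ncard_insert_of_notMem fun h => hkn.not_ge h.2,
    ncard_insert_of_notMem fun h => hkn.asymm h.2, ncard_Icc_nat, ncard_Ico_nat] at hcard
  omega

theorem permIrreducible_rauzyA {n : ℕ} {π : ℕ → ℕ} (hπ : BijOn π (Icc 1 n) (Icc 1 n))
    (hirr : PermIrreducible n π) : PermIrreducible n (rauzyA n π) := by
  intro k hk hkn hmaps
  have hπx : ∀ x ∈ Icc 1 k, π x ∈ Icc 1 n := fun x hx =>
    hπ.mapsTo (Icc_subset_Icc_right hkn.le hx)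
  have hle : ∀ x ∈ Icc 1 k, rauzyShift n (π n) (π x) ≤ k := fun x hx => (hmaps hx).2
  rcases le_or_gt k (π n) with hkm | hmk
  · exact hirr k hk hkn fun x hx =>
      ⟨(hπx x hx).1, (rauzyShift_le_iff_of_le hkm).mp (hle x hx)⟩
  · have hπn := hπ.mapsTo (show n ∈ Icc 1 n from ⟨by omega, le_rfl⟩)
    refine not_mapsTo_insert_Icc_insert_Ico hπ.injOn hk hkn ?_
    rintro x (rfl | hx)
    · exact mem_insert_of_mem _ ⟨hπn.1, hmk⟩
    · rcases (rauzyShift_le_iff_of_lt hmk (hπx x hx).2).mp (hle x hx) with hlt | heq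
      · exact mem_insert_of_mem _ ⟨(hπx x hx).1, hlt⟩
      · exact Or.inl heq

/-- The first-case Rauzy update of an irreducible permutation of `{1,…,n}` is
again a permutation of `{1,…,n}` and is irreducible. -/
theorem rauzyA_irreducible
    (n : ℕ) (σ : ℕ → ℕ)
    (hbij : Set.BijOn σ (Set.Icc 1 n) (Set.Icc 1 n))
    (hirr : PermIrreducible n σ) :
    Set.BijOn (rauzyA n σ) (Set.Icc 1 n) (Set.Icc 1 n) ∧
      PermIrreducible n (rauzyA n σ) :=
  ⟨rauzyA_eq_comp n σ ▸ (rauzyShift_bijOn n (σ n)).comp hbij, permIrreducible_rauzyA hbij hirr⟩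
end

section
/- If π is an irreducible permutation of {1,…,n} and π'' is defined by π''(j) = π(j) for j ≤ π^{-1}(n), π''(j) = π(n) for j = π^{-1}(n)+1, and π''(j) = π(j−1) otherwise, then π'' is a permutation of {1,…,n} and is irreducible. -/
open Set

/-- The permutation update of the second case of Rauzy induction, where `p` is
the preimage of `n` under `π`. -/
def rauzyB (n p : ℕ) (π : ℕ → ℕ) : ℕ → ℕ :=
  fun j => if j ≤ p then π j else if j = p + 1 then π n else π (j - 1)

lemma rauzyB_eq_comp (n p : ℕ) (π : ℕ → ℕ) :
    rauzyB n p π = π ∘ rauzyB n p id := by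
  funext j
  simp only [rauzyB, Function.comp, id]
  split_ifs <;> rfl

lemma tau_bij (n p : ℕ) (hp : p ∈ Set.Icc 1 n) :
    Set.BijOn (rauzyB n p id) (Set.Icc 1 n) (Set.Icc 1 n) := by
  obtain ⟨hp1, hpn⟩ := hp
  refine ⟨?_, ?_, ?_⟩
  · intro j hj
    simp only [Set.mem_Icc] at *
    simp only [rauzyB, id]
    split_ifs <;> omega
  · intro a ha b hb hab
    simp only [Set.mem_Icc] at ha hb
    simp only [rauzyB, id] at hab
    split_ifs at hab <;> omega
  · intro m hm
    simp only [Set.mem_Icc] at hm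
    by_cases h1 : m ≤ p
    · exact ⟨m, by simp only [Set.mem_Icc]; omega, by simp [rauzyB, h1]⟩
    · by_cases h2 : m = n
      · refine ⟨p + 1, by simp only [Set.mem_Icc]; omega, ?_⟩
        simp only [rauzyB, id]
        split_ifs <;> omega
      · refine ⟨m + 1, by simp only [Set.mem_Icc]; omega, ?_⟩
        simp only [rauzyB, id]
        split_ifs <;> omega

/-- The second-case Rauzy update of an irreducible permutation of `{1,…,n}` is
again a permutation of `{1,…,n}` and is irreducible. -/
theorem rauzyB_irreducible
    (n : ℕ) (σ : ℕ → ℕ)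
    (hbij : Set.BijOn σ (Set.Icc 1 n) (Set.Icc 1 n))
    (hirr : PermIrreducible n σ)
    (p : ℕ) (hp : p ∈ Set.Icc 1 n) (hpval : σ p = n) :
    Set.BijOn (rauzyB n p σ) (Set.Icc 1 n) (Set.Icc 1 n) ∧
      PermIrreducible n (rauzyB n p σ) := by
  obtain ⟨hp1, hpn⟩ := hp
  constructor
  · rw [rauzyB_eq_comp]
    exact hbij.comp (tau_bij n p ⟨hp1, hpn⟩)
  · intro k hk1 hkn hmaps
    by_cases hkp : k ≤ p
    · apply hirr k hk1 hkn
      intro j hj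
      have h := hmaps hj
      simp only [Set.mem_Icc] at hj
      rwa [rauzyB, if_pos (by omega : j ≤ p)] at h
    · have hpmem : p ∈ Set.Icc 1 k := by simp only [Set.mem_Icc]; omega
      have h := hmaps hpmem
      rw [rauzyB, if_pos le_rfl, hpval] at h
      simp only [Set.mem_Icc] at h
      omega
end
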